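/- Covering lemma: Let Ω ⊂ ℝ² be a smooth bounded domain, K ∈ ℕ, ε > 0, and let f ∈ L¹(Ω) be a.e. nonnegative with ∫_Ω f = 1. Suppose that for every choice of points x_{11},…,x_{1l} ∈ Ω and x_{21},…,x_{2m} ∈ ∂Ω with 2l + m ≤ K one has ∫_{∪_{i,k} B_ε(x_{ik})} f < 1 − ε. Then there exist ε̃, r̃ > 0 depending only on ε and Ω, and points x̃_{11},…,x̃_{1l̃} (with d(x̃_{1k}, ∂Ω) ≥ r̃) and x̃_{21},…,x̃_{2m̃}, such that 2l̃ + m̃ ≥ K+1, the points are pairwise at distance ≥ 4r̃, and ∫_{B_{r̃}(x̃_{ik})} f ≥ ε̃ for every i,k. -/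

import Mathlib

open MeasureTheory Metric Set

/-!
Cover `Ω` by `N` balls of radius `r = ε/6` centred in `Ω` and call a ball heavy if it carries
mass at least `ε̃ = ε/(2(N+1))`; the light balls carry less than `ε/2` in total. A maximal
`4r`-separated family of heavy centres has all heavy balls within its `5r`-neighbourhood.
Its centres at distance `≥ r` from `∂Ω` are kept, and the others are moved to a point of `∂Ω`
within `r`; the resulting `ε`-balls then carry mass `≥ 1 - ε/2`, so by hypothesis the family
must be large, `2 l̃ + m̃ ≥ K + 1`.
-/

namespace Finset

variable {α : Type*}

noncomputable def enumFin (s : Finset α) (k : Fin s.card) : α := s.equivFin.symm k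

theorem enumFin_mem (s : Finset α) (k : Fin s.card) : s.enumFin k ∈ s :=
  (s.equivFin.symm k).2

theorem enumFin_injective (s : Finset α) : Function.Injective s.enumFin :=
  Subtype.val_injective.comp s.equivFin.symm.injective

theorem exists_enumFin_eq {s : Finset α} {x : α} (hx : x ∈ s) : ∃ k, s.enumFin k = x :=
  ⟨s.equivFin ⟨x, hx⟩, by simp [enumFin]⟩

theorem exists_subset_pairwise_le_dist_forall_exists_dist_lt [PseudoMetricSpace α]
    [DecidableEq α] {a : ℝ} (ha : 0 < a) (H : Finset α) :
    ∃ M ⊆ H, (M : Set α).Pairwise (fun x y => a ≤ dist x y) ∧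
      ∀ z ∈ H, ∃ s ∈ M, dist z s < a := by
  induction H using Finset.induction_on with
  | empty => exact ⟨∅, Subset.rfl, by simp, by simp⟩
  | insert z H _ ih =>
    obtain ⟨M, hMH, hMsep, hMnear⟩ := ih
    have hnear_insert : ∀ w ∈ H, ∃ s ∈ insert z M, dist w s < a := fun w hw =>
      (hMnear w hw).imp fun s ⟨hs, hws⟩ => ⟨mem_insert_of_mem hs, hws⟩
    by_cases hz : ∃ s ∈ M, dist z s < a
    · exact ⟨M, hMH.trans (subset_insert _ _), hMsep,
        forall_mem_insert _ _ _ |>.2 ⟨hz, hMnear⟩⟩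
    · push Not at hz
      refine ⟨insert z M, insert_subset_insert _ hMH, ?_, ?_⟩
      · rw [coe_insert]
        exact hMsep.insert fun s hs _ => ⟨hz s hs, dist_comm z s ▸ hz s hs⟩
      · exact forall_mem_insert _ _ _ |>.2
          ⟨⟨z, mem_insert_self _ _, by simpa using ha⟩, hnear_insert⟩

end Finset

section SetIntegral

variable {α ι : Type*} [MeasurableSpace α] {μ : Measure α} {f : α → ℝ}

theorem MeasureTheory.Measure.restrict_biUnion_finset_le (t : Finset ι) (A : ι → Set α) :
    μ.restrict (⋃ i ∈ t, A i) ≤ ∑ i ∈ t, μ.restrict (A i) := by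
  classical
  induction t using Finset.induction_on with
  | empty => simp
  | insert a t ha ih =>
    rw [Finset.set_biUnion_insert, Finset.sum_insert ha]
    exact (Measure.restrict_union_le _ _).trans (add_le_add_right ih _)

theorem setIntegral_biUnion_finset_le {t : Finset ι} {A : ι → Set α}
    (hf : ∀ i ∈ t, IntegrableOn f (A i) μ) (hf0 : ∀ i ∈ t, 0 ≤ᵐ[μ.restrict (A i)] f) :
    ∫ x in ⋃ i ∈ t, A i, f x ∂μ ≤ ∑ i ∈ t, ∫ x in A i, f x ∂μ :=
  (integral_mono_measure (Measure.restrict_biUnion_finset_le t A)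
    (ae_finsetSum_measure_iff.2 hf0) (integrable_finsetSum_measure.2 hf)).trans_eq
    (integral_finsetSum_measure hf)

theorem setIntegral_inter_mono {s u v : Set α} (hf : IntegrableOn f s μ)
    (hf0 : 0 ≤ᵐ[μ.restrict s] f) (huv : u ⊆ v) :
    ∫ x in s ∩ u, f x ∂μ ≤ ∫ x in s ∩ v, f x ∂μ :=
  setIntegral_mono_set (hf.mono_set inter_subset_left)
    (ae_restrict_of_ae_restrict_of_subset inter_subset_left hf0)
    (inter_subset_inter_right s huv).eventuallyLE

/-- Discarding the pieces of mass `< δ` of a finite cover loses at most `δ` per piece. -/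
theorem setIntegral_le_setIntegral_inter_biUnion_filter_add {s : Set α}
    (hf : IntegrableOn f s μ) (hf0 : 0 ≤ᵐ[μ.restrict s] f) {t : Finset ι} {A : ι → Set α}
    (hA : ∀ i, MeasurableSet (A i)) (hst : s ⊆ ⋃ i ∈ t, A i) {δ : ℝ} (hδ : 0 ≤ δ) :
    ∫ x in s, f x ∂μ ≤
      ∫ x in s ∩ ⋃ i ∈ t.filter (fun i => δ ≤ ∫ x in s ∩ A i, f x ∂μ), A i, f x ∂μ +
        t.card * δ := by
  classical
  set heavy := t.filter fun i => δ ≤ ∫ x in s ∩ A i, f x ∂μ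
  set light := t.filter fun i => ¬δ ≤ ∫ x in s ∩ A i, f x ∂μ
  have hlight : s \ ⋃ i ∈ heavy, A i ⊆ ⋃ i ∈ light, s ∩ A i := by
    rintro x ⟨hxs, hxU⟩
    obtain ⟨i, hi, hxi⟩ := mem_iUnion₂.1 (hst hxs)
    refine mem_iUnion₂.2 ⟨i, Finset.mem_filter.2 ⟨hi, fun hδi => hxU ?_⟩, hxs, hxi⟩
    exact mem_iUnion₂.2 ⟨i, Finset.mem_filter.2 ⟨hi, hδi⟩, hxi⟩
  have hlight_sub : ⋃ i ∈ light, s ∩ A i ⊆ s := iUnion₂_subset fun _ _ => inter_subset_left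
  have hmono : ∀ {u}, u ⊆ s → 0 ≤ᵐ[μ.restrict u] f := fun hu =>
    ae_restrict_of_ae_restrict_of_subset hu hf0
  calc ∫ x in s, f x ∂μ
      = ∫ x in s ∩ ⋃ i ∈ heavy, A i, f x ∂μ + ∫ x in s \ ⋃ i ∈ heavy, A i, f x ∂μ :=
        (integral_inter_add_sdiff (Finset.measurableSet_biUnion _ fun i _ => hA i) hf).symm
    _ ≤ ∫ x in s ∩ ⋃ i ∈ heavy, A i, f x ∂μ + ∑ i ∈ light, ∫ x in s ∩ A i, f x ∂μ := by
        gcongr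
        exact (setIntegral_mono_set (hf.mono_set hlight_sub) (hmono hlight_sub)
          hlight.eventuallyLE).trans (setIntegral_biUnion_finset_le
            (fun i _ => hf.mono_set inter_subset_left) fun i _ => hmono inter_subset_left)
    _ ≤ ∫ x in s ∩ ⋃ i ∈ heavy, A i, f x ∂μ + t.card * δ := by
        gcongr
        calc ∑ i ∈ light, ∫ x in s ∩ A i, f x ∂μ ≤ light.card • δ :=
              Finset.sum_le_card_nsmul _ _ _ fun i hi =>
                (not_le.1 (Finset.mem_filter.1 hi).2).le
          _ ≤ t.card * δ := by
              rw [nsmul_eq_mul]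
              exact mul_le_mul_of_nonneg_right
                (by exact_mod_cast Finset.card_filter_le _ _) hδ

end SetIntegral

section Metric

variable {X : Type*} [PseudoMetricSpace X]

theorem exists_separated_heavy_subset [MeasurableSpace X] [OpensMeasurableSpace X]
    {μ : Measure X} {f : X → ℝ} {Ω : Set X} (hf : IntegrableOn f Ω μ)
    (hf0 : 0 ≤ᵐ[μ.restrict Ω] f) {T : Finset X} {r : ℝ} (hΩT : Ω ⊆ ⋃ z ∈ T, ball z r)
    {a δ : ℝ} (ha : 0 < a) (hδ : 0 ≤ δ) :
    ∃ M ⊆ T, (M : Set X).Pairwise (fun x y => a ≤ dist x y) ∧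
      (∀ z ∈ M, δ ≤ ∫ x in Ω ∩ ball z r, f x ∂μ) ∧
      ∫ x in Ω, f x ∂μ ≤ ∫ x in Ω ∩ ⋃ z ∈ M, ball z (a + r), f x ∂μ + T.card * δ := by
  classical
  set H := T.filter fun z => δ ≤ ∫ x in Ω ∩ ball z r, f x ∂μ
  obtain ⟨M, hMH, hMsep, hMnear⟩ := H.exists_subset_pairwise_le_dist_forall_exists_dist_lt ha
  refine ⟨M, hMH.trans (Finset.filter_subset _ _), hMsep,
    fun z hz => (Finset.mem_filter.1 (hMH hz)).2, ?_⟩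
  have hcover : ⋃ z ∈ H, ball z r ⊆ ⋃ z ∈ M, ball z (a + r) :=
    iUnion₂_subset fun z hz x hx => by
      obtain ⟨s, hs, hzs⟩ := hMnear z hz
      exact mem_iUnion₂.2 ⟨s, hs, ball_subset_ball' (by linarith) hx⟩
  exact (setIntegral_le_setIntegral_inter_biUnion_filter_add hf hf0
    (fun _ => measurableSet_ball) hΩT hδ).trans
    (add_le_add_left (setIntegral_inter_mono hf hf0 hcover) _)

/-- Centres at distance `≥ r` from `∂Ω` are kept, the others are moved onto `∂Ω`. -/
theorem exists_interior_frontier_cover {Ω : Set X} (hfr : (frontier Ω).Nonempty)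
    {M : Finset X} (hMΩ : ↑M ⊆ Ω) {r a b : ℝ} (hr : 0 ≤ r) (hab : a + r ≤ b) :
    ∃ (y₁ : Fin (M.filter fun s => r ≤ infDist s (frontier Ω)).card → X)
      (y₂ : Fin (M.filter fun s => ¬r ≤ infDist s (frontier Ω)).card → X),
      (∀ k, y₁ k ∈ Ω) ∧ (∀ k, y₂ k ∈ frontier Ω) ∧
      ⋃ z ∈ M, ball z a ⊆ (⋃ k, ball (y₁ k) b) ∪ ⋃ k, ball (y₂ k) b := by
  set M₁ := M.filter fun s => r ≤ infDist s (frontier Ω)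
  set M₂ := M.filter fun s => ¬r ≤ infDist s (frontier Ω)
  have hnear : ∀ s ∈ M₂, ∃ y ∈ frontier Ω, dist s y < r := fun s hs =>
    (infDist_lt_iff hfr).1 (not_le.1 (Finset.mem_filter.1 hs).2)
  choose! p hp_mem hp_dist using hnear
  refine ⟨M₁.enumFin, fun k => p (M₂.enumFin k),
    fun k => hMΩ (Finset.mem_filter.1 (M₁.enumFin_mem k)).1,
    fun k => hp_mem _ (M₂.enumFin_mem k), iUnion₂_subset fun s hs x hx => ?_⟩
  by_cases hs_deep : r ≤ infDist s (frontier Ω)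
  · obtain ⟨k, rfl⟩ := M₁.exists_enumFin_eq (Finset.mem_filter.2 ⟨hs, hs_deep⟩)
    exact Or.inl (mem_iUnion.2 ⟨k, ball_subset_ball (by linarith) hx⟩)
  · obtain ⟨k, rfl⟩ := M₂.exists_enumFin_eq (Finset.mem_filter.2 ⟨hs, hs_deep⟩)
    have := hp_dist _ (M₂.enumFin_mem k)
    exact Or.inr (mem_iUnion.2 ⟨k, ball_subset_ball' (by linarith) hx⟩)

theorem Bornology.IsBounded.frontier_nonempty {E : Type*} [NormedAddCommGroup E]
    [NormedSpace ℝ E] [Nontrivial E] {s : Set E} (hs : IsBounded s) (hne : s.Nonempty) :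
    (frontier s).Nonempty :=
  nonempty_frontier_iff.2 ⟨hne, fun h => NormedSpace.unbounded_univ ℝ E (h ▸ hs)⟩

end Metric

/-- Covering lemma: if a probability density `f` on `Ω` is not `(1−ε)`-concentrated on any
union of `ε`-balls centered at `l` interior points and `m` boundary points with `2l+m ≤ K`,
then there are `ε̃, r̃ > 0` (depending only on `ε` and `Ω`) and at least `K+1` (counting
interior points twice) `4r̃`-separated points, each of whose `r̃`-balls carries mass `≥ ε̃`. -/
theorem covering_lemma
    (Ω : Set (EuclideanSpace ℝ (Fin 2))) (hΩopen : IsOpen Ω)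
    (hΩbdd : Bornology.IsBounded Ω) (K : ℕ) (ε : ℝ) (hε : 0 < ε) :
    ∃ εt > (0 : ℝ), ∃ rt > (0 : ℝ),
      ∀ f : EuclideanSpace ℝ (Fin 2) → ℝ,
        IntegrableOn f Ω volume → (∀ y ∈ Ω, 0 ≤ f y) → (∫ y in Ω, f y) = 1 →
        (∀ (l m : ℕ), 2 * l + m ≤ K →
          ∀ y1 : Fin l → EuclideanSpace ℝ (Fin 2), (∀ k, y1 k ∈ Ω) →
          ∀ y2 : Fin m → EuclideanSpace ℝ (Fin 2), (∀ k, y2 k ∈ frontier Ω) →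
            ∫ y in Ω ∩ ((⋃ k, ball (y1 k) ε) ∪ ⋃ k, ball (y2 k) ε), f y < 1 - ε) →
        ∃ (lt mt : ℕ) (x1 : Fin lt → EuclideanSpace ℝ (Fin 2))
          (x2 : Fin mt → EuclideanSpace ℝ (Fin 2)),
          K + 1 ≤ 2 * lt + mt ∧
          (∀ k, x1 k ∈ Ω ∧ rt ≤ infDist (x1 k) (frontier Ω)) ∧
          (∀ k, x2 k ∈ closure Ω) ∧
          (∀ k k', k ≠ k' → 4 * rt ≤ dist (x1 k) (x1 k')) ∧
          (∀ k k', k ≠ k' → 4 * rt ≤ dist (x2 k) (x2 k')) ∧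
          (∀ k k', 4 * rt ≤ dist (x1 k) (x2 k')) ∧
          (∀ k, εt ≤ ∫ y in Ω ∩ ball (x1 k) rt, f y) ∧
          (∀ k, εt ≤ ∫ y in Ω ∩ ball (x2 k) rt, f y) := by
  set r := ε / 6 with hr_def
  have hr : 0 < r := by positivity
  obtain ⟨t, htΩ, ht, hΩt⟩ := finite_approx_of_totallyBounded
    (hΩbdd.isCompact_closure.totallyBounded.subset subset_closure) r hr
  obtain ⟨T, rfl⟩ := ht.exists_finset_coe
  rw [Finset.set_biUnion_coe] at hΩt
  set δ := ε / (2 * (T.card + 1))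
  have hδ : 0 < δ := by positivity
  have hTδ : T.card * δ ≤ ε / 2 := by
    rw [mul_div_assoc', div_le_div_iff₀ (by positivity) two_pos]
    nlinarith
  refine ⟨δ, hδ, r, hr, fun f hf hf0 hf1 hconc => ?_⟩
  have hf0' : 0 ≤ᵐ[volume.restrict Ω] f := ae_restrict_of_forall_mem hΩopen.measurableSet hf0
  have hfr := hΩbdd.frontier_nonempty (nonempty_iff_ne_empty.2 (by rintro rfl; simp at hf1))
  obtain ⟨M, hMT, hMsep, hMheavy, hMmass⟩ :=
    exists_separated_heavy_subset hf hf0' hΩt (a := 4 * r) (by positivity) hδ.le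
  set M₁ := M.filter fun s => r ≤ infDist s (frontier Ω)
  set M₂ := M.filter fun s => ¬r ≤ infDist s (frontier Ω)
  by_cases hK : K + 1 ≤ 2 * M₁.card + M₂.card
  · have h₁ (k) := Finset.mem_filter.1 (M₁.enumFin_mem k)
    have h₂ (k) := Finset.mem_filter.1 (M₂.enumFin_mem k)
    refine ⟨_, _, M₁.enumFin, M₂.enumFin, hK, fun k => ⟨htΩ (hMT (h₁ k).1), (h₁ k).2⟩,
      fun k => subset_closure (htΩ (hMT (h₂ k).1)),
      fun k k' hk => hMsep (h₁ k).1 (h₁ k').1 (M₁.enumFin_injective.ne hk),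
      fun k k' hk => hMsep (h₂ k).1 (h₂ k').1 (M₂.enumFin_injective.ne hk),
      fun k k' => hMsep (h₁ k).1 (h₂ k').1 fun h => (h₂ k').2 (h ▸ (h₁ k).2),
      fun k => hMheavy _ (h₁ k).1, fun k => hMheavy _ (h₂ k).1⟩
  · obtain ⟨y₁, y₂, hy₁, hy₂, hcover⟩ :=
      exists_interior_frontier_cover hfr ((Finset.coe_subset.2 hMT).trans htΩ) hr.le
        (a := 4 * r + r) (b := ε) (by linarith [hr_def])
    have hsmall := hconc _ _ (Nat.le_of_lt_succ (not_le.1 hK)) y₁ hy₁ y₂ hy₂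
    linarith [setIntegral_inter_mono hf hf0' hcover]
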